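/- Reversibility of rules AF₁/AF₂: if s ∈ ⟦AF φ⟧_U and s ∉ U, then either s ∈ ⟦φ⟧_∅ or every s' with s → s' satisfies s' ∈ ⟦AF φ⟧_{U∪{s}}. -/
import Mathlib


variable {S : Type*}

def lfp (f : Set S → Set S) : Set S := ⋂₀ {X | f X ⊆ X}
def gfp (f : Set S → Set S) : Set S := ⋃₀ {X | X ⊆ f X}

def preE (r : S → S → Prop) (Y : Set S) : Set S := {s | ∃ s' ∈ Y, r s s'}
def preA (r : S → S → Prop) (Y : Set S) : Set S := {s | ∀ s', r s s' → s' ∈ Y}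

def egSem (r : S → S → Prop) (phi : Set S) (U : Set S) : Set S :=
  gfp (fun Y => phi ∩ preE r Y ∪ U)
def agSem (r : S → S → Prop) (phi : Set S) (U : Set S) : Set S :=
  gfp (fun Y => phi ∩ preA r Y ∪ U)
def efSem (r : S → S → Prop) (phi : Set S) (U : Set S) : Set S :=
  lfp (fun Y => (phi ∪ preE r Y) \ U)
def afSem (r : S → S → Prop) (phi : Set S) (U : Set S) : Set S :=
  lfp (fun Y => (phi ∪ preA r Y) \ U)

lemma lfp_le' {f : Set S → Set S} {X : Set S} (h : f X ⊆ X) : lfp f ⊆ X :=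
  Set.sInter_subset_of_mem h

lemma prefixed_lfp {f : Set S → Set S}
    (mono : ∀ {A B : Set S}, A ⊆ B → f A ⊆ f B) : f (lfp f) ⊆ lfp f := by
  intro t ht
  refine Set.mem_sInter.2 fun X hX => ?_
  exact hX (mono (lfp_le' hX) ht)

theorem af_reversible (r : S → S → Prop) (phi U : Set S) (s : S)
    (h : s ∈ afSem r phi U) (hs : s ∉ U) :
    s ∈ phi ∨ ∀ s', r s s' → s' ∈ afSem r phi (U ∪ {s}) := by
  by_cases hphi : s ∈ phi
  · exact Or.inl hphi
  right
  set B := afSem r phi (U ∪ {s}) with hBdef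
  set f : Set S → Set S := fun Y => (phi ∪ preA r Y) \ U with hfdef
  set g : Set S → Set S := fun Y => (phi ∪ preA r Y) \ (U ∪ {s}) with hgdef
  have monof : ∀ {A C : Set S}, A ⊆ C → f A ⊆ f C := by
    intro A C hAC t ht
    refine ⟨?_, ht.2⟩
    rcases ht.1 with h1 | h1
    · exact Or.inl h1
    · exact Or.inr fun s' hr => hAC (h1 s' hr)
  have monog : ∀ {A C : Set S}, A ⊆ C → g A ⊆ g C := by
    intro A C hAC t ht
    refine ⟨?_, ht.2⟩
    rcases ht.1 with h1 | h1
    · exact Or.inl h1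
    · exact Or.inr fun s' hr => hAC (h1 s' hr)
  have hBfix : g B ⊆ B := prefixed_lfp monog
  -- The invariant predicate
  let P : Set S → Prop := fun X =>
    X ⊆ f X ∧ (s ∉ X → X ⊆ B) ∧ (s ∈ X → ∀ s', r s s' → s' ∈ B)
  -- step: P is preserved by f
  have step : ∀ X, P X → P (f X) := by
    rintro X ⟨hX1, hX2, hX3⟩
    refine ⟨monof hX1, ?_, ?_⟩
    · intro hns t ht
      have hXB : X ⊆ B := hX2 fun hsX => hns (hX1 hsX)
      have htns : t ∉ U ∪ {s} := by
        rintro (hU | hts)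
        · exact ht.2 hU
        · exact hns (Set.mem_singleton_iff.1 hts ▸ ht)
      apply hBfix
      refine ⟨?_, htns⟩
      rcases ht.1 with h1 | h1
      · exact Or.inl h1
      · exact Or.inr fun s' hr => hXB (h1 s' hr)
    · intro hsf s' hr
      by_cases hsX : s ∈ X
      · exact hX3 hsX s' hr
      · have hXB : X ⊆ B := hX2 hsX
        rcases hsf.1 with h1 | h1
        · exact absurd h1 hphi
        · exact hXB (h1 s' hr)
  -- the union of all sets satisfying P
  let W : Set S := ⋃₀ {X | P X}
  have hWf : W ⊆ f W := by
    rintro t ⟨X, hPX, htX⟩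
    exact monof (fun u hu => Set.mem_sUnion.2 ⟨X, hPX, hu⟩) (hPX.1 htX)
  have hPW : P W := by
    refine ⟨hWf, ?_, ?_⟩
    · rintro hns t ⟨X, hPX, htX⟩
      exact hPX.2.1 (fun hsX => hns (Set.mem_sUnion.2 ⟨X, hPX, hsX⟩)) htX
    · rintro ⟨X, hPX, hsX⟩ s' hr
      exact hPX.2.2 hsX s' hr
  have hfWW : f W ⊆ W := fun t ht => Set.mem_sUnion.2 ⟨f W, step W hPW, ht⟩
  have hsub : afSem r phi U ⊆ W := lfp_le' hfWW
  exact hPW.2.2 (hsub h)
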